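/- arXiv:2006.11189 — 2 statements merged into one kernel-verified Lean document; each statement's English description precedes it below -/
import Mathlib

section
/- Let (𝒳, ω) be a left Frobenius pair in an abelian category 𝒞. The following are equivalent: (a) (𝒳, ω^∧) is a complete left cotorsion pair in 𝒞; (b) (𝒳, ω^∧) is a complete cotorsion pair in 𝒞; (c) every object of 𝒞 lies in 𝒳^∧ (that is, 𝒞 = 𝒳^∧). -/
/-!
Auslander–Buchweitz approximation theory. Pushing out along `ω`-envelopes `0 → X → W → X' → 0`
shows, by induction on the `𝒳`-resolution dimension, that every `M ∈ 𝒳^∧` has sequences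
`0 → Y → X → M → 0` and `0 → M → Y' → X' → 0` with `Y, Y' ∈ ω^∧` and `X, X' ∈ 𝒳`. Since
`𝒳 ⊥ ω^∧` by dimension shifting, approximations of every object make `(𝒳, ω^∧)` a complete
cotorsion pair: an object `Ext¹`-orthogonal to one side splits off from its approximation, and
`ω^∧` is closed under summands because an object of `𝒳^∧` that is `Ext`-orthogonal to `𝒳` has
a left approximation whose middle term splits off its `ω`-envelope. Conversely, a sequence
`0 → Y → X → M → 0` with `Y ∈ ω^∧ ⊆ 𝒳^∧` puts `M` in `𝒳^∧`.
-/

namespace CutPaper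

open CategoryTheory CategoryTheory.Limits CategoryTheory.Abelian ZeroObject

universe w v u

variable {C : Type u} [Category.{v} C] [Abelian C]

/-- There exists a short exact sequence `0 ⟶ X ⟶ Y ⟶ Z ⟶ 0` in `C`. -/
def SES (X Y Z : C) : Prop :=
  ∃ (f : X ⟶ Y) (g : Y ⟶ Z) (zero : f ≫ g = 0),
    (ShortComplex.mk f g zero).ShortExact

/-- A class of objects is closed under isomorphisms. -/
def ClosedUnderIso (A : Set C) : Prop :=
  ∀ ⦃X Y : C⦄, (X ≅ Y) → X ∈ A → Y ∈ A

/-- A class of objects is closed under direct summands (i.e. retracts). -/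
def ClosedUnderDirectSummands (A : Set C) : Prop :=
  ∀ ⦃X Y : C⦄ (i : X ⟶ Y) (r : Y ⟶ X), i ≫ r = 𝟙 X → Y ∈ A → X ∈ A

/-- A class of objects is closed under extensions. -/
def ClosedUnderExtensions (A : Set C) : Prop :=
  ∀ ⦃X Y Z : C⦄, SES X Y Z → X ∈ A → Z ∈ A → Y ∈ A

/-- A class of objects is closed under kernels of epimorphisms between its objects. -/
def ClosedUnderEpiKernels (A : Set C) : Prop :=
  ∀ ⦃X Y Z : C⦄, SES X Y Z → Y ∈ A → Z ∈ A → X ∈ A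

/-- A class of objects is closed under cokernels of monomorphisms between its objects. -/
def ClosedUnderMonoCokernels (A : Set C) : Prop :=
  ∀ ⦃X Y Z : C⦄, SES X Y Z → X ∈ A → Y ∈ A → Z ∈ A

/-- A class is left thick if it is closed under extensions, epi-kernels and direct summands. -/
def LeftThick (A : Set C) : Prop :=
  ClosedUnderExtensions A ∧ ClosedUnderEpiKernels A ∧ ClosedUnderDirectSummands A

/-- A class is right thick if closed under extensions, mono-cokernels and direct summands. -/
def RightThick (A : Set C) : Prop :=
  ClosedUnderExtensions A ∧ ClosedUnderMonoCokernels A ∧ ClosedUnderDirectSummands A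

/-- A class is thick if it is both left and right thick. -/
def IsThickClass (A : Set C) : Prop := LeftThick A ∧ RightThick A

/-- The smallest thick class containing `F`. -/
def ThickClosure (F : Set C) : Set C := ⋂₀ {T : Set C | IsThickClass T ∧ F ⊆ T}

/-- A class is closed under finite (binary) coproducts. -/
def ClosedUnderBinaryCoproducts (A : Set C) : Prop :=
  ∀ ⦃X Y : C⦄, X ∈ A → Y ∈ A → (X ⊞ Y) ∈ A

/-- `ω` is a relative cogenerator in `A`: `ω ⊆ A` and every `X ∈ A` fits in a short
exact sequence `0 → X → W → X' → 0` with `W ∈ ω`, `X' ∈ A`. -/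
def IsRelativeCogenerator (ω A : Set C) : Prop :=
  ω ⊆ A ∧ ∀ X ∈ A, ∃ W X', W ∈ ω ∧ X' ∈ A ∧ SES X W X'

/-- `ν` is a relative generator in `ω`: `ν ⊆ ω` and every `W ∈ ω` fits in a short
exact sequence `0 → W' → V → W → 0` with `V ∈ ν`, `W' ∈ ω`. -/
def IsRelativeGenerator (ν ω : Set C) : Prop :=
  ν ⊆ ω ∧ ∀ W ∈ ω, ∃ V W', V ∈ ν ∧ W' ∈ ω ∧ SES W' V W

/-- The objects of `B`-resolution dimension at most `n` (the class `B^∧_n`). -/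
def ResDimLE (B : Set C) : ℕ → Set C
  | 0 => {X | ∃ B₀ ∈ B, Nonempty (X ≅ B₀)}
  | (n + 1) => ResDimLE B n ∪ {X | ∃ K B₀, K ∈ ResDimLE B n ∧ B₀ ∈ B ∧ SES K B₀ X}

/-- The class `B^∧` of objects of finite `B`-resolution dimension. -/
def ResFin (B : Set C) : Set C := {X | ∃ n, X ∈ ResDimLE B n}

/-- The `B`-resolution dimension of an object, valued in `ℕ∞`. -/
noncomputable def resDim (B : Set C) (X : C) : ℕ∞ :=
  sInf ((fun n : ℕ => (n : ℕ∞)) '' {n | X ∈ ResDimLE B n})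

/-- The objects of `B`-coresolution dimension at most `n` (the class `B^∨_n`). -/
def CoresDimLE (B : Set C) : ℕ → Set C
  | 0 => {X | ∃ B₀ ∈ B, Nonempty (X ≅ B₀)}
  | (n + 1) => CoresDimLE B n ∪ {X | ∃ B₀ K, B₀ ∈ B ∧ K ∈ CoresDimLE B n ∧ SES X B₀ K}

/-- The `B`-coresolution dimension of an object, valued in `ℕ∞`. -/
noncomputable def coresDim (B : Set C) (X : C) : ℕ∞ :=
  sInf ((fun n : ℕ => (n : ℕ∞)) '' {n | X ∈ CoresDimLE B n})

/-- The class of `(𝒳, 𝒴)`-Gorenstein projective objects: 0-th cycles of exact,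
`Hom(-, 𝒴)`-acyclic complexes with components in `𝒳`. -/
def GorensteinProj (𝒳 𝒴 : Set C) : Set C :=
  {M | ∃ K : ChainComplex C ℤ,
    (∀ m : ℤ, K.X m ∈ 𝒳) ∧
    (∀ m : ℤ, K.ExactAt m) ∧
    (∀ Y₀ ∈ 𝒴, ∀ m : ℤ, ∀ f : K.X m ⟶ Y₀, K.d (m + 1) m ≫ f = 0 →
      ∃ g : K.X (m - 1) ⟶ Y₀, K.d m (m - 1) ≫ g = f) ∧
    Nonempty (M ≅ K.cycles 0)}

section HasExt

variable [HasExt.{w} C]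

/-- `Ext¹(A, B) = 0`. -/
def ext1Zero (A B : C) : Prop := Subsingleton (Abelian.Ext.{w} A B 1)

/-- `Extⁱ(A, B) = 0` for all `i ≥ 1`. -/
def extVanish (A B : C) : Prop := ∀ i : ℕ, 1 ≤ i → Subsingleton (Abelian.Ext.{w} A B i)

/-- `Extⁱ(X, Y) = 0` for all `i ≥ 1`, `X ∈ 𝒜`, `Y ∈ ℬ`. -/
def ExtPairVanish (𝒜 ℬ : Set C) : Prop := ∀ X ∈ 𝒜, ∀ Y ∈ ℬ, extVanish.{w} X Y

/-- The right `Ext¹`-orthogonal complement `𝒜^{⊥1}`. -/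
def rightPerp1 (𝒜 : Set C) : Set C := {N | ∀ X ∈ 𝒜, ext1Zero.{w} X N}

/-- The total right orthogonal complement `𝒜^{⊥}`. -/
def rightPerp (𝒜 : Set C) : Set C := {N | ∀ X ∈ 𝒜, extVanish.{w} X N}

/-- The left `Ext¹`-orthogonal complement `^{⊥1}ℬ`. -/
def leftPerp1 (ℬ : Set C) : Set C := {M | ∀ Y ∈ ℬ, ext1Zero.{w} M Y}

/-- `(𝒜, ℬ)` is a left cotorsion pair cut along `𝒮`. -/
def LeftCutCotorsion (𝒜 ℬ 𝒮 : Set C) : Prop :=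
  ClosedUnderDirectSummands 𝒜 ∧ 𝒜 ∩ 𝒮 = leftPerp1.{w} ℬ ∩ 𝒮

/-- `(𝒜, ℬ)` is a complete left cotorsion pair cut along `𝒮`. -/
def CompleteLeftCutCotorsion (𝒜 ℬ 𝒮 : Set C) : Prop :=
  LeftCutCotorsion.{w} 𝒜 ℬ 𝒮 ∧ ∀ S ∈ 𝒮, ∃ B₀ A₀, B₀ ∈ ℬ ∧ A₀ ∈ 𝒜 ∧ SES B₀ A₀ S

/-- `(𝒜, ℬ)` is a right cotorsion pair cut along `𝒮`. -/
def RightCutCotorsion (𝒜 ℬ 𝒮 : Set C) : Prop :=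
  ClosedUnderDirectSummands ℬ ∧ ℬ ∩ 𝒮 = rightPerp1.{w} 𝒜 ∩ 𝒮

/-- `(𝒜, ℬ)` is a complete right cotorsion pair cut along `𝒮`. -/
def CompleteRightCutCotorsion (𝒜 ℬ 𝒮 : Set C) : Prop :=
  RightCutCotorsion.{w} 𝒜 ℬ 𝒮 ∧ ∀ S ∈ 𝒮, ∃ B₀ A₀, B₀ ∈ ℬ ∧ A₀ ∈ 𝒜 ∧ SES S B₀ A₀

/-- `(𝒜, ℬ)` is a complete cotorsion pair cut along `𝒮`. -/
def CompleteCutCotorsion (𝒜 ℬ 𝒮 : Set C) : Prop :=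
  CompleteLeftCutCotorsion.{w} 𝒜 ℬ 𝒮 ∧ CompleteRightCutCotorsion.{w} 𝒜 ℬ 𝒮

/-- `(𝒜, ℬ)` is a complete left cotorsion pair in `C`. -/
def CompleteLeftCotorsionPair (𝒜 ℬ : Set C) : Prop :=
  𝒜 = leftPerp1.{w} ℬ ∧ ∀ X : C, ∃ B₀ A₀, B₀ ∈ ℬ ∧ A₀ ∈ 𝒜 ∧ SES B₀ A₀ X

/-- `(𝒜, ℬ)` is a complete cotorsion pair in `C`. -/
def CompleteCotorsionPair (𝒜 ℬ : Set C) : Prop :=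
  CompleteLeftCotorsionPair.{w} 𝒜 ℬ ∧ ℬ = rightPerp1.{w} 𝒜 ∧
    ∀ X : C, ∃ B₀ A₀, B₀ ∈ ℬ ∧ A₀ ∈ 𝒜 ∧ SES X B₀ A₀

/-- `(𝒳, ω)` is a left Frobenius pair in `C`. -/
def LeftFrobenius (𝒳 ω : Set C) : Prop :=
  LeftThick 𝒳 ∧ ClosedUnderDirectSummands ω ∧
    ExtPairVanish.{w} 𝒳 ω ∧ IsRelativeCogenerator ω 𝒳

/-- `(𝒳, ω)` is a left Frobenius pair cut along `𝒮`. -/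
def LeftFrobeniusCutAlong (𝒳 ω 𝒮 : Set C) : Prop :=
  LeftThick 𝒳 ∧
  LeftFrobenius.{w} (𝒳 ∩ 𝒮) (ω ∩ 𝒮) ∧
  (ExtPairVanish.{w} (ω ∩ 𝒮) ω ∧ IsRelativeGenerator (ω ∩ 𝒮) ω) ∧
  (ClosedUnderExtensions ω ∧ ClosedUnderDirectSummands ω)

/-- `(𝒜, ℬ)` is a left weak AB context in `C`. -/
def LeftWeakABContext (𝒜 ℬ : Set C) : Prop :=
  LeftFrobenius.{w} 𝒜 (𝒜 ∩ ℬ) ∧ RightThick ℬ ∧ ℬ ⊆ ResFin 𝒜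

/-- `(𝒜, ℬ)` is a left weak AB context cut along `𝒮`. -/
def LeftWeakABContextCutAlong (𝒜 ℬ 𝒮 : Set C) : Prop :=
  LeftFrobeniusCutAlong.{w} 𝒜 (𝒜 ∩ ℬ) 𝒮 ∧ RightThick (ℬ ∩ 𝒮) ∧
    ℬ ∩ 𝒮 ⊆ ResFin (𝒜 ∩ 𝒮)

/-- `(𝒳, 𝒴)` is a GP-admissible pair. -/
def GPAdmissible (𝒳 𝒴 : Set C) : Prop :=
  ExtPairVanish.{w} 𝒳 𝒴 ∧
  (∀ M : C, ∃ X₀, X₀ ∈ 𝒳 ∧ ∃ p : X₀ ⟶ M, Epi p) ∧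
  ClosedUnderBinaryCoproducts 𝒳 ∧ ClosedUnderBinaryCoproducts 𝒴 ∧
  ClosedUnderExtensions 𝒳 ∧
  IsRelativeCogenerator (𝒳 ∩ 𝒴) 𝒳

/-- The class `ℰ_l(𝒜, ℬ)` of objects admitting a suitable left approximation. -/
def EClassLeft (𝒜 ℬ : Set C) : Set C :=
  {X | ∃ B₀ A₀, B₀ ∈ ℬ ∧ A₀ ∈ 𝒜 ∧ SES B₀ A₀ X}

/-- The maximal left cotorsion cut `𝕊_l(𝒜, ℬ)`. -/
def MaxLeftCut (𝒜 ℬ : Set C) : Set C :=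
  ⋃₀ {𝒮 | CompleteLeftCutCotorsion.{w} 𝒜 ℬ 𝒮}

/-- `pd(M) ≤ n`, via vanishing of `Ext` in degrees `> n`. -/
def pdLE (M : C) (n : ℕ) : Prop :=
  ∀ i : ℕ, n < i → ∀ N : C, Subsingleton (Abelian.Ext.{w} M N i)

/-- The projective dimension of an object, valued in `ℕ∞`. -/
noncomputable def pd (M : C) : ℕ∞ :=
  sInf ((fun n : ℕ => (n : ℕ∞)) '' {n | pdLE.{w} M n})

/-- The projective dimension of a class of objects. -/
noncomputable def pdClass (𝒜 : Set C) : ℕ∞ := ⨆ M ∈ 𝒜, pd.{w} M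

/-- The `𝔓_𝒮`-condition of the second correspondence theorem. -/
def PPair (𝒮 ℱ 𝒢 : Set C) : Prop :=
  CompleteCutCotorsion.{w} ℱ 𝒢 (ThickClosure ℱ) ∧
  ExtPairVanish.{w} ℱ 𝒢 ∧
  IsRelativeGenerator (ℱ ∩ 𝒢 ∩ 𝒮) (ℱ ∩ 𝒢) ∧
  IsRelativeCogenerator (ℱ ∩ 𝒢 ∩ 𝒮) (ℱ ∩ 𝒢)

end HasExt

/-- The class of projective objects of `C`. -/
def ProjClass (C : Type u) [Category.{v} C] : Set C := {P : C | Projective P}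

section HasExt
variable (C) [HasExt.{w} C]

/-- The finitistic dimension of `C`. -/
noncomputable def Findim : ℕ∞ := pdClass.{w} (ResFin (ProjClass C))

end HasExt

lemma SES.of_iso_middle {X Y Y' Z : C} (h : SES X Y Z) (e : Y ≅ Y') : SES X Y' Z := by
  obtain ⟨f, g, zero, hS⟩ := h
  refine ⟨f ≫ e.hom, e.inv ≫ g, by simp [zero], ?_⟩
  exact ShortComplex.shortExact_of_iso
    (ShortComplex.isoMk (Iso.refl X) e (Iso.refl Z) (by simp) (by simp)) hS

lemma ses_zero_of_iso {X M : C} (e : M ≅ X) : SES 0 X M := by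
  refine ⟨0, e.inv, zero_comp, ShortComplex.ShortExact.mk' ?_ ?_ inferInstance⟩
  · exact (ShortComplex.exact_iff_mono _ rfl).2 inferInstance
  · exact ⟨fun u v _ => (isZero_zero C).eq_of_tgt u v⟩

lemma ses_pushout_inr {K A M B : C} {f : K ⟶ A} {g : A ⟶ M} {zero : f ≫ g = 0}
    (hS : (ShortComplex.mk f g zero).ShortExact) (h : K ⟶ B) :
    SES B (pushout f h) M := by
  have := hS.mono_f
  have := hS.epi_g
  have hcond : f ≫ g = h ≫ (0 : B ⟶ M) := by rw [zero, comp_zero]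
  have : Epi (pushout.desc g 0 hcond) :=
    epi_of_epi_fac (pushout.inl_desc g 0 hcond)
  refine ⟨pushout.inr f h, pushout.desc g 0 hcond, pushout.inr_desc g 0 hcond,
    ShortComplex.ShortExact.mk' (ShortComplex.exact_of_g_is_cokernel _ ?_) inferInstance
      inferInstance⟩
  refine CokernelCofork.IsColimit.ofπ' _ _ (fun {T} k hk => ?_)
  obtain ⟨l, hl⟩ := CokernelCofork.IsColimit.desc' hS.exact.gIsCokernel (pushout.inl f h ≫ k)
    (by rw [← Category.assoc, pushout.condition, Category.assoc, hk, comp_zero])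
  refine ⟨l, pushout.hom_ext ?_ ?_⟩
  · rw [pushout.inl_desc_assoc]
    exact hl
  · rw [pushout.inr_desc_assoc, zero_comp, hk]

lemma ses_comp_pushout_inl {Y X M W : C} {f : Y ⟶ X} {g : X ⟶ M} {zero : f ≫ g = 0}
    (hS : (ShortComplex.mk f g zero).ShortExact) (u : X ⟶ W) [Mono u] :
    SES Y W (pushout u g) := by
  have := hS.mono_f
  have := hS.epi_g
  have zero' : (f ≫ u) ≫ pushout.inl u g = 0 := by
    rw [Category.assoc, pushout.condition, ← Category.assoc, zero, zero_comp]
  refine ⟨f ≫ u, pushout.inl u g, zero',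
    ShortComplex.ShortExact.mk' (ShortComplex.exact_of_g_is_cokernel _ ?_) inferInstance
      inferInstance⟩
  refine CokernelCofork.IsColimit.ofπ' _ _ (fun {T} k hk => ?_)
  obtain ⟨l, hl⟩ := CokernelCofork.IsColimit.desc' hS.exact.gIsCokernel (u ≫ k)
    (by rw [← Category.assoc]; exact hk)
  exact ⟨pushout.desc k l hl.symm, pushout.inl_desc _ _ _⟩

lemma SES.exists_pushout {K A M B N : C} (h₁ : SES K A M) (h₂ : SES K B N) :
    ∃ P : C, SES B P M ∧ SES A P N := by
  obtain ⟨f, g, zero₁, hS₁⟩ := h₁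
  obtain ⟨p, q, zero₂, hS₂⟩ := h₂
  exact ⟨pushout f p, ses_pushout_inr hS₁ p,
    (ses_pushout_inr hS₂ f).of_iso_middle (pushoutSymmetry p f)⟩

def EClassRight (𝒜 ℬ : Set C) : Set C :=
  {X | ∃ B₀ A₀, B₀ ∈ ℬ ∧ A₀ ∈ 𝒜 ∧ SES X B₀ A₀}

lemma mem_resDimLE_zero {A : Set C} {X : C} (hX : X ∈ A) : X ∈ ResDimLE A 0 :=
  ⟨X, hX, ⟨Iso.refl X⟩⟩

lemma resDimLE_mono {A B : Set C} (hAB : A ⊆ B) (n : ℕ) : ResDimLE A n ⊆ ResDimLE B n := by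
  induction n with
  | zero => exact fun X ⟨B₀, hB₀, e⟩ => ⟨B₀, hAB hB₀, e⟩
  | succ n ih =>
    rintro X (hX | ⟨K, B₀, hK, hB₀, hses⟩)
    · exact Or.inl (ih hX)
    · exact Or.inr ⟨K, B₀, ih hK, hAB hB₀, hses⟩

lemma nonempty_of_mem_resFin {A : Set C} {X : C} (hX : X ∈ ResFin A) : A.Nonempty := by
  obtain ⟨n, hn⟩ := hX
  induction n generalizing X with
  | zero => obtain ⟨B₀, hB₀, -⟩ := hn; exact ⟨B₀, hB₀⟩
  | succ n ih =>
    rcases hn with hX | ⟨-, B₀, -, hB₀, -⟩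
    · exact ih hX
    · exact ⟨B₀, hB₀⟩

lemma zero_mem_of_closedUnderDirectSummands {A : Set C} (hA : ClosedUnderDirectSummands A)
    (hne : A.Nonempty) : (0 : C) ∈ A := by
  obtain ⟨W, hW⟩ := hne
  exact hA (0 : (0 : C) ⟶ W) 0 ((isZero_zero C).eq_of_src _ _) hW

lemma eClassLeft_resFin_subset_resFin {𝒳 ω : Set C} (hωX : ω ⊆ 𝒳) :
    EClassLeft 𝒳 (ResFin ω) ⊆ ResFin 𝒳 := by
  rintro M ⟨K, X, ⟨n, hK⟩, hX, hS⟩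
  exact ⟨n + 1, Or.inr ⟨K, X, resDimLE_mono hωX n hK, hX, hS⟩⟩

/-- Salce's trick: an `ω`-envelope `0 → X → W → X' → 0` of the middle term turns a left
approximation of `M` into a right one, by a pushout along `X ↠ M`. -/
lemma eClassLeft_resFin_subset_eClassRight {𝒳 ω : Set C} (hω : IsRelativeCogenerator ω 𝒳) :
    EClassLeft 𝒳 (ResFin ω) ⊆ EClassRight 𝒳 (ResFin ω) := by
  rintro M ⟨Y, X, ⟨m, hY⟩, hX, f, g, zero, hS⟩
  obtain ⟨W, X', hW, hX', u, v, zero', hT⟩ := hω.2 X hX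
  have := hT.mono_f
  exact ⟨pushout u g, X', ⟨m + 1, Or.inr ⟨Y, W, hY, hW, ses_comp_pushout_inl hS u⟩⟩, hX',
    ses_pushout_inr hT g⟩

/-- Auslander–Buchweitz approximations, by induction on the `𝒳`-resolution dimension: given
`0 → K → X₀ → M → 0` and a right approximation `0 → K → Y → X'' → 0` of `K`, the pushout `P`
fits in `0 → Y → P → M → 0` and `0 → X₀ → P → X'' → 0`. -/
lemma resFin_subset_eClassLeft {𝒳 ω : Set C} (h𝒳 : ClosedUnderExtensions 𝒳)
    (hω : IsRelativeCogenerator ω 𝒳) (hω0 : (0 : C) ∈ ω) :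
    ResFin 𝒳 ⊆ EClassLeft 𝒳 (ResFin ω) := by
  rintro M ⟨n, hM⟩
  induction n generalizing M with
  | zero =>
    obtain ⟨X₀, hX₀, ⟨e⟩⟩ := hM
    exact ⟨0, X₀, ⟨0, mem_resDimLE_zero hω0⟩, hX₀, ses_zero_of_iso e⟩
  | succ n ih =>
    rcases hM with hM | ⟨K, X₀, hK, hX₀, hS⟩
    · exact ih hM
    · obtain ⟨Y, X'', hY, hX'', hT⟩ := eClassLeft_resFin_subset_eClassRight hω (ih hK)
      obtain ⟨P, hYPM, hX₀PX''⟩ := hS.exists_pushout hT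
      exact ⟨Y, P, hY, h𝒳 hX₀PX'' hX₀ hX'', hYPM⟩

section

variable [HasExt.{w} C] {𝒳 ω : Set C}

lemma _root_.CategoryTheory.ShortComplex.ShortExact.exists_section_of_subsingleton_ext
    {S : ShortComplex C} (hS : S.ShortExact) (hext : Subsingleton (Ext.{w} S.X₃ S.X₁ 1)) :
    ∃ s : S.X₃ ⟶ S.X₂, s ≫ S.g = 𝟙 S.X₃ := by
  obtain ⟨x, hx⟩ := Ext.covariant_sequence_exact₃ S.X₃ hS (Ext.mk₀ (𝟙 S.X₃)) (zero_add 1)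
    (hext.elim _ _)
  obtain ⟨s, rfl⟩ := (Ext.mk₀_bijective _ _).2 x
  exact ⟨s, (Ext.mk₀_bijective _ _).1 (by rwa [← Ext.mk₀_comp_mk₀])⟩

lemma _root_.CategoryTheory.ShortComplex.ShortExact.exists_retraction_of_subsingleton_ext
    {S : ShortComplex C} (hS : S.ShortExact) (hext : Subsingleton (Ext.{w} S.X₃ S.X₁ 1)) :
    ∃ r : S.X₂ ⟶ S.X₁, S.f ≫ r = 𝟙 S.X₁ := by
  obtain ⟨x, hx⟩ := Ext.contravariant_sequence_exact₁ hS S.X₁ (Ext.mk₀ (𝟙 S.X₁)) (add_zero 1)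
    (hext.elim _ _)
  obtain ⟨r, rfl⟩ := (Ext.mk₀_bijective _ _).2 x
  exact ⟨r, (Ext.mk₀_bijective _ _).1 (by rwa [← Ext.mk₀_comp_mk₀])⟩

lemma subsingleton_ext_of_retract {X N Y : C} (i : N ⟶ Y) (r : Y ⟶ N) (hir : i ≫ r = 𝟙 N)
    {n : ℕ} (hY : Subsingleton (Ext.{w} X Y n)) : Subsingleton (Ext.{w} X N n) := by
  refine subsingleton_of_forall_eq 0 fun α => ?_
  have hα : α = (α.comp (Ext.mk₀ i) (add_zero n)).comp (Ext.mk₀ r) (add_zero n) := by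
    rw [Ext.comp_assoc_of_third_deg_zero, Ext.mk₀_comp_mk₀, hir, Ext.comp_mk₀_id]
  rw [hα, hY.elim (α.comp (Ext.mk₀ i) (add_zero n)) 0, Ext.zero_comp]

lemma _root_.CategoryTheory.ShortComplex.ShortExact.subsingleton_ext_X₃
    {S : ShortComplex C} (hS : S.ShortExact) (X : C) {n : ℕ}
    (h₂ : Subsingleton (Ext.{w} X S.X₂ n)) (h₁ : Subsingleton (Ext.{w} X S.X₁ (n + 1))) :
    Subsingleton (Ext.{w} X S.X₃ n) := by
  refine subsingleton_of_forall_eq 0 fun x₃ => ?_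
  obtain ⟨x₂, rfl⟩ := Ext.covariant_sequence_exact₃ X hS x₃ rfl (h₁.elim _ _)
  rw [h₂.elim x₂ 0, Ext.zero_comp]

lemma _root_.CategoryTheory.ShortComplex.ShortExact.subsingleton_ext_X₂
    {S : ShortComplex C} (hS : S.ShortExact) (X : C) {n : ℕ}
    (h₁ : Subsingleton (Ext.{w} X S.X₁ n)) (h₃ : Subsingleton (Ext.{w} X S.X₃ n)) :
    Subsingleton (Ext.{w} X S.X₂ n) := by
  refine subsingleton_of_forall_eq 0 fun x₂ => ?_
  obtain ⟨x₁, rfl⟩ := Ext.covariant_sequence_exact₂ X hS x₂ (h₃.elim _ _)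
  rw [h₁.elim x₁ 0, Ext.zero_comp]

lemma eq_leftPerp1_of_forall_mem_eClassLeft {𝒜 ℬ : Set C} (h𝒜 : ClosedUnderDirectSummands 𝒜)
    (hvan : ∀ A ∈ 𝒜, ∀ B ∈ ℬ, ext1Zero.{w} A B) (happrox : ∀ M : C, M ∈ EClassLeft 𝒜 ℬ) :
    𝒜 = leftPerp1.{w} ℬ := by
  refine subset_antisymm (fun A hA B hB => hvan A hA B hB) fun M hM => ?_
  obtain ⟨B, A, hB, hA, f, g, zero, hS⟩ := happrox M
  obtain ⟨s, hs⟩ := hS.exists_section_of_subsingleton_ext (hM B hB)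
  exact h𝒜 s g hs hA

lemma eq_rightPerp1_of_forall_mem_eClassRight {𝒜 ℬ : Set C} (hℬ : ClosedUnderDirectSummands ℬ)
    (hvan : ∀ A ∈ 𝒜, ∀ B ∈ ℬ, ext1Zero.{w} A B) (happrox : ∀ M : C, M ∈ EClassRight 𝒜 ℬ) :
    ℬ = rightPerp1.{w} 𝒜 := by
  refine subset_antisymm (fun B hB A hA => hvan A hA B hB) fun N hN => ?_
  obtain ⟨B, A, hB, hA, f, g, zero, hS⟩ := happrox N
  obtain ⟨r, hr⟩ := hS.exists_retraction_of_subsingleton_ext (hN A hA)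
  exact hℬ f r hr hB

lemma extPairVanish_resFin (h : ExtPairVanish.{w} 𝒳 ω) : ExtPairVanish.{w} 𝒳 (ResFin ω) := by
  rintro X hX Y ⟨n, hY⟩
  induction n generalizing Y with
  | zero =>
    obtain ⟨W, hW, ⟨e⟩⟩ := hY
    exact fun i hi => subsingleton_ext_of_retract e.hom e.inv e.hom_inv_id (h X hX W hW i hi)
  | succ n ih =>
    rcases hY with hY | ⟨K, W, hK, hW, f, g, zero, hS⟩
    · exact ih Y hY
    · exact fun i hi => hS.subsingleton_ext_X₃ X (h X hX W hW i hi) (ih K hK (i + 1) (by omega))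

lemma LeftFrobenius.zero_mem (h : LeftFrobenius.{w} 𝒳 ω) (hne : 𝒳.Nonempty) : (0 : C) ∈ ω := by
  obtain ⟨-, hωsummand, -, -, hω⟩ := h
  obtain ⟨X, hX⟩ := hne
  obtain ⟨W, -, hW, -⟩ := hω X hX
  exact zero_mem_of_closedUnderDirectSummands hωsummand ⟨W, hW⟩

/-- In a left approximation `0 → Y → X → N → 0` of `N`, the middle term is `Ext`-orthogonal
to `𝒳`, so its `ω`-envelope splits and `X ∈ ω`. -/
lemma LeftFrobenius.mem_resFin_of_extVanish (h : LeftFrobenius.{w} 𝒳 ω) {N : C}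
    (hN : N ∈ ResFin 𝒳) (hvan : ∀ X ∈ 𝒳, extVanish.{w} X N) : N ∈ ResFin ω := by
  have hω0 := h.zero_mem (nonempty_of_mem_resFin hN)
  obtain ⟨⟨hext, -⟩, hωsummand, hω𝒳, hω⟩ := h
  obtain ⟨Y, X, ⟨m, hY⟩, hX, f, g, zero, hS⟩ := resFin_subset_eClassLeft hext hω hω0 hN
  have hXvan : ∀ X' ∈ 𝒳, extVanish.{w} X' X := fun X' hX' i hi =>
    hS.subsingleton_ext_X₂ X' (extPairVanish_resFin hω𝒳 X' hX' Y ⟨m, hY⟩ i hi) (hvan X' hX' i hi)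
  obtain ⟨W, X', hW, hX', u, v, zero', hT⟩ := hω.2 X hX
  obtain ⟨r, hr⟩ := hT.exists_retraction_of_subsingleton_ext (hXvan X' hX' 1 le_rfl)
  exact ⟨m + 1, Or.inr ⟨Y, X, hY, hωsummand u r hr hW, f, g, zero, hS⟩⟩

lemma LeftFrobenius.completeCotorsionPair (h : LeftFrobenius.{w} 𝒳 ω)
    (h𝒳 : ∀ M : C, M ∈ ResFin 𝒳) : CompleteCotorsionPair.{w} 𝒳 (ResFin ω) := by
  have ⟨⟨hext, _, h𝒳summand⟩, _, hωvan, hω⟩ := h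
  have hω0 := h.zero_mem (nonempty_of_mem_resFin (h𝒳 0))
  have hleft : ∀ M : C, M ∈ EClassLeft 𝒳 (ResFin ω) := fun M =>
    resFin_subset_eClassLeft hext hω hω0 (h𝒳 M)
  have hright : ∀ M : C, M ∈ EClassRight 𝒳 (ResFin ω) := fun M =>
    eClassLeft_resFin_subset_eClassRight hω (hleft M)
  have hvan := extPairVanish_resFin hωvan
  have hsummand : ClosedUnderDirectSummands (ResFin ω) := fun N Y i r hir hY =>
    h.mem_resFin_of_extVanish (h𝒳 N) fun X hX j hj =>
      subsingleton_ext_of_retract i r hir (hvan X hX Y hY j hj)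
  have hvan1 : ∀ X ∈ 𝒳, ∀ Y ∈ ResFin ω, ext1Zero.{w} X Y := fun X hX Y hY =>
    hvan X hX Y hY 1 le_rfl
  exact ⟨⟨eq_leftPerp1_of_forall_mem_eClassLeft h𝒳summand hvan1 hleft, hleft⟩,
    eq_rightPerp1_of_forall_mem_eClassRight hsummand hvan1 hright, hright⟩

end

/-- Proposition 2.7 (1). For a left Frobenius pair `(𝒳, ω)`, the following
are equivalent: (a) `(𝒳, ω^∧)` is a complete left cotorsion pair in `C`; (b) `(𝒳, ω^∧)` is a
complete cotorsion pair in `C`; (c) every object of `C` lies in `𝒳^∧`. -/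
theorem leftFrobenius_completeLeftCotorsionPair_tfae
    {C : Type u} [CategoryTheory.Category.{v} C] [CategoryTheory.Abelian C]
    [CategoryTheory.HasExt.{w} C]
    (𝒳 ω : Set C) (h : LeftFrobenius.{w} 𝒳 ω) :
    (CompleteLeftCotorsionPair.{w} 𝒳 (ResFin ω) ↔ CompleteCotorsionPair.{w} 𝒳 (ResFin ω)) ∧
    (CompleteLeftCotorsionPair.{w} 𝒳 (ResFin ω) ↔ ∀ M : C, M ∈ ResFin 𝒳) := by
  have hac : CompleteLeftCotorsionPair.{w} 𝒳 (ResFin ω) → ∀ M : C, M ∈ ResFin 𝒳 :=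
    fun ha M => eClassLeft_resFin_subset_resFin h.2.2.2.1 (ha.2 M)
  exact ⟨⟨fun ha => h.completeCotorsionPair (hac ha), fun hb => hb.1⟩,
    ⟨hac, fun hc => (h.completeCotorsionPair hc).1⟩⟩

end CutPaper
end

section
/- Let 𝒮, 𝒜, ℬ be classes of objects in an abelian category 𝒞 and set ω := 𝒜 ∩ ℬ. Assume: (1) 𝒜 is closed under extensions and direct summands; (2) ℬ is closed under direct summands; (3) ω ∩ 𝒮 is a relative cogenerator in 𝒜; (4) (ω ∩ 𝒮)^∧ ⊆ ℬ; (5) Ext^1(A, B) = 0 for all A ∈ 𝒜 ∩ 𝒮, B ∈ ℬ and for all A ∈ 𝒜, B ∈ ℬ ∩ 𝒮. Then (𝒜, ℬ) is a complete cotorsion pair cut along 𝒜^∧ ∩ 𝒮. -/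
/-!
Write `ν := 𝒜 ∩ ℬ ∩ 𝒮`. Since `ν` is a relative cogenerator in the extension-closed class `𝒜`,
every object of `𝒜^∧` has Auslander–Buchweitz approximations `0 → B → A → S → 0` and
`0 → S → B' → A' → 0` with `A, A' ∈ 𝒜` and `B, B' ∈ ν^∧ ⊆ ℬ`: by induction on the resolution
dimension, a left approximation yields a right one by pushing out along a `ν`-cogenerator
sequence of `A`, and a right approximation of the syzygy `K` of `0 → K → A₀ → S → 0` yields a left
approximation of `S` by pushing out along `K → A₀`. These approximations give completeness.
For the orthogonality, an object of `^{⊥1}ℬ ∩ 𝒮` splits off its left approximation, so it is a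
direct summand of an object of `𝒜`; dually for `𝒜^{⊥1} ∩ 𝒮`.
-/

namespace CutPaper

open CategoryTheory CategoryTheory.Limits CategoryTheory.Abelian ZeroObject

universe w v u

variable {C : Type u} [Category.{v} C] [Abelian C]

namespace SES

lemma of_iso {X Y Z X' Y' Z' : C} (h : SES X Y Z) (a : X ≅ X') (b : Y ≅ Y') (c : Z ≅ Z') :
    SES X' Y' Z' := by
  obtain ⟨f, g, w, hS⟩ := h
  refine ⟨a.inv ≫ f ≫ b.hom, b.inv ≫ g ≫ c.hom, by simp [reassoc_of% w], ?_⟩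
  exact ShortComplex.shortExact_of_iso (ShortComplex.isoMk a b c (by simp) (by simp)) hS

lemma biprod (X Y : C) : SES X (X ⊞ Y) Y :=
  ⟨biprod.inl, biprod.snd, biprod.inl_snd, ShortComplex.Splitting.shortExact
    { r := biprod.fst
      s := biprod.inr
      f_r := by simp
      s_g := by simp
      id := by simp [biprod.total] }⟩

lemma pushout_inr {S : ShortComplex C} (hS : S.ShortExact) {W : C} (h : S.X₁ ⟶ W) :
    SES W (pushout S.f h) S.X₃ := by
  have := hS.mono_f
  have := hS.epi_g
  have hg : S.f ≫ S.g = h ≫ 0 := by simp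
  refine ⟨pushout.inr S.f h, pushout.desc S.g 0 hg, pushout.inr_desc _ _ _, ?_⟩
  have : Epi (pushout.desc S.g 0 hg) := epi_of_epi_fac (pushout.inl_desc _ _ hg)
  refine ShortComplex.ShortExact.mk' (ShortComplex.exact_of_g_is_cokernel _ ?_)
    inferInstance inferInstance
  refine CokernelCofork.IsColimit.ofπ' _ _ fun {T} k hk => ?_
  have hfk : S.f ≫ pushout.inl S.f h ≫ k = 0 := by
    rw [← Category.assoc, pushout.condition, Category.assoc, hk, comp_zero]
  obtain ⟨l, hl⟩ := CokernelCofork.IsColimit.desc' hS.gIsCokernel _ hfk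
  refine ⟨l, pushout.hom_ext ?_ ?_⟩
  · rw [pushout.inl_desc_assoc]
    exact hl
  · rw [pushout.inr_desc_assoc, zero_comp]
    exact hk.symm

lemma pushout_inl {S : ShortComplex C} (hS : S.ShortExact) {W : C} (m : S.X₂ ⟶ W) [Mono m] :
    SES S.X₁ W (pushout m S.g) := by
  have := hS.mono_f
  have := hS.epi_g
  refine ⟨S.f ≫ m, pushout.inl m S.g, by simp [pushout.condition], ?_⟩
  refine ShortComplex.ShortExact.mk' (ShortComplex.exact_of_g_is_cokernel _ ?_)
    inferInstance inferInstance
  refine CokernelCofork.IsColimit.ofπ' _ _ fun {T} k hk => ?_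
  obtain ⟨u, hu⟩ := CokernelCofork.IsColimit.desc' hS.gIsCokernel (m ≫ k)
    (by simpa using hk)
  exact ⟨pushout.desc k u hu.symm, pushout.inl_desc _ _ _⟩

lemma exists_pushout_of_ses {K A S B A' : C} (h₁ : SES K A S) (h₂ : SES K B A') :
    ∃ P, SES B P S ∧ SES A P A' := by
  obtain ⟨i, p, w₁, hS₁⟩ := h₁
  obtain ⟨j, q, w₂, hS₂⟩ := h₂
  exact ⟨pushout i j, pushout_inr hS₁ j,
    (pushout_inr hS₂ i).of_iso (Iso.refl _) (pushoutSymmetry j i) (Iso.refl _)⟩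

lemma exists_pushout_of_ses_of_ses_mid {B A S W A' : C} (h₁ : SES B A S) (h₂ : SES A W A') :
    ∃ Q, SES S Q A' ∧ SES B W Q := by
  obtain ⟨i, p, w₁, hS₁⟩ := h₁
  obtain ⟨m, c, w₂, hS₂⟩ := h₂
  have := hS₂.mono_f
  exact ⟨pushout m p, pushout_inr hS₂ p, pushout_inl hS₁ m⟩

end SES

lemma mem_resFin_of_mem {ν : Set C} {W : C} (hW : W ∈ ν) : W ∈ ResFin ν :=
  ⟨0, W, hW, ⟨Iso.refl W⟩⟩

lemma eClassLeft_mono {𝒜 ℬ ℬ' : Set C} (h : ℬ ⊆ ℬ') : EClassLeft 𝒜 ℬ ⊆ EClassLeft 𝒜 ℬ' :=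
  fun _ ⟨B, A, hB, hA, hS⟩ => ⟨B, A, h hB, hA, hS⟩

lemma eClassRight_mono {𝒜 ℬ ℬ' : Set C} (h : ℬ ⊆ ℬ') : EClassRight 𝒜 ℬ ⊆ EClassRight 𝒜 ℬ' :=
  fun _ ⟨B, A, hB, hA, hS⟩ => ⟨B, A, h hB, hA, hS⟩

section Approximations

variable {ν 𝒜 : Set C}

lemma eClassLeft_subset_eClassRight (hν : IsRelativeCogenerator ν 𝒜) :
    EClassLeft 𝒜 (ResFin ν) ⊆ EClassRight 𝒜 (ResFin ν) := by
  rintro S ⟨B, A, ⟨k, hB⟩, hA, hBAS⟩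
  obtain ⟨W, A', hW, hA', hAWA'⟩ := hν.2 A hA
  obtain ⟨Q, hSQA', hBWQ⟩ := hBAS.exists_pushout_of_ses_of_ses_mid hAWA'
  exact ⟨Q, A', ⟨k + 1, Or.inr ⟨B, W, hB, hW, hBWQ⟩⟩, hA', hSQA'⟩

lemma mem_eClassLeft_of_ses {ℬ : Set C} (hext : ClosedUnderExtensions 𝒜) {K A S : C}
    (hK : K ∈ EClassRight 𝒜 ℬ) (hA : A ∈ 𝒜) (hKAS : SES K A S) : S ∈ EClassLeft 𝒜 ℬ := by
  obtain ⟨B, A', hB, hA', hKBA'⟩ := hK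
  obtain ⟨P, hBPS, hAPA'⟩ := hKAS.exists_pushout_of_ses hKBA'
  exact ⟨B, P, hB, hext hAPA' hA hA', hBPS⟩

lemma resDimLE_zero_subset_eClassLeft (hext : ClosedUnderExtensions 𝒜)
    (hν : IsRelativeCogenerator ν 𝒜) : ResDimLE 𝒜 0 ⊆ EClassLeft 𝒜 (ResFin ν) := by
  rintro S ⟨A, hA, ⟨e⟩⟩
  obtain ⟨W, -, hW, -, -⟩ := hν.2 A hA
  exact ⟨W, W ⊞ A, mem_resFin_of_mem hW, hext (SES.biprod W A) (hν.1 hW) hA,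
    (SES.biprod W A).of_iso (Iso.refl _) (Iso.refl _) e.symm⟩

lemma resFin_subset_eClassLeft_s7 (hext : ClosedUnderExtensions 𝒜)
    (hν : IsRelativeCogenerator ν 𝒜) : ResFin 𝒜 ⊆ EClassLeft 𝒜 (ResFin ν) := by
  rintro S ⟨n, hS⟩
  induction n generalizing S with
  | zero => exact resDimLE_zero_subset_eClassLeft hext hν hS
  | succ n ih =>
    rcases hS with hS | ⟨K, A, hK, hA, hKAS⟩
    · exact ih hS
    · exact mem_eClassLeft_of_ses hext (eClassLeft_subset_eClassRight hν (ih hK)) hA hKAS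

lemma resFin_subset_eClassRight (hext : ClosedUnderExtensions 𝒜)
    (hν : IsRelativeCogenerator ν 𝒜) : ResFin 𝒜 ⊆ EClassRight 𝒜 (ResFin ν) :=
  (resFin_subset_eClassLeft_s7 hext hν).trans (eClassLeft_subset_eClassRight hν)

end Approximations

section Splitting

variable [HasExt.{w} C] {S : ShortComplex C}

lemma exists_section_of_ext1Zero (hS : S.ShortExact) (h : ext1Zero.{w} S.X₃ S.X₁) :
    ∃ s : S.X₃ ⟶ S.X₂, s ≫ S.g = 𝟙 S.X₃ := by
  obtain ⟨x, hx⟩ := Abelian.Ext.covariant_sequence_exact₃ S.X₃ hS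
    (Abelian.Ext.mk₀ (𝟙 S.X₃)) rfl (@Subsingleton.elim _ h _ _)
  obtain ⟨s, rfl⟩ := (Abelian.Ext.mk₀_bijective _ _).2 x
  rw [Abelian.Ext.mk₀_comp_mk₀] at hx
  exact ⟨s, (Abelian.Ext.mk₀_bijective _ _).1 hx⟩

lemma exists_retraction_of_ext1Zero (hS : S.ShortExact) (h : ext1Zero.{w} S.X₃ S.X₁) :
    ∃ r : S.X₂ ⟶ S.X₁, S.f ≫ r = 𝟙 S.X₁ := by
  obtain ⟨x, hx⟩ := Abelian.Ext.contravariant_sequence_exact₁ hS S.X₁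
    (Abelian.Ext.mk₀ (𝟙 S.X₁)) rfl (@Subsingleton.elim _ h _ _)
  obtain ⟨r, rfl⟩ := (Abelian.Ext.mk₀_bijective _ _).2 x
  rw [Abelian.Ext.mk₀_comp_mk₀] at hx
  exact ⟨r, (Abelian.Ext.mk₀_bijective _ _).1 hx⟩

end Splitting

section CutCotorsion

variable [HasExt.{w} C] {𝒜 ℬ 𝒮 : Set C}

lemma completeLeftCutCotorsion_of_subset_eClassLeft (hsum : ClosedUnderDirectSummands 𝒜)
    (hext : ∀ A ∈ 𝒜 ∩ 𝒮, ∀ B ∈ ℬ, ext1Zero.{w} A B) (happrox : 𝒮 ⊆ EClassLeft 𝒜 ℬ) :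
    CompleteLeftCutCotorsion.{w} 𝒜 ℬ 𝒮 := by
  refine ⟨⟨hsum, Set.ext fun X => ⟨fun hX => ⟨fun B hB => hext X hX B hB, hX.2⟩, ?_⟩⟩, happrox⟩
  rintro ⟨hperp, hX⟩
  obtain ⟨B, A, hB, hA, f, g, w, hS⟩ := happrox hX
  obtain ⟨s, hs⟩ := exists_section_of_ext1Zero hS (hperp B hB)
  exact ⟨hsum s g hs hA, hX⟩

lemma completeRightCutCotorsion_of_subset_eClassRight (hsum : ClosedUnderDirectSummands ℬ)
    (hext : ∀ A ∈ 𝒜, ∀ B ∈ ℬ ∩ 𝒮, ext1Zero.{w} A B) (happrox : 𝒮 ⊆ EClassRight 𝒜 ℬ) :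
    CompleteRightCutCotorsion.{w} 𝒜 ℬ 𝒮 := by
  refine ⟨⟨hsum, Set.ext fun X => ⟨fun hX => ⟨fun A hA => hext A hA X hX, hX.2⟩, ?_⟩⟩, happrox⟩
  rintro ⟨hperp, hX⟩
  obtain ⟨B, A, hB, hA, f, g, w, hS⟩ := happrox hX
  obtain ⟨r, hr⟩ := exists_retraction_of_ext1Zero hS (hperp A hA)
  exact ⟨hsum f r hr hB, hX⟩

end CutCotorsion

/-- Proposition 2.22. Under conditions (1)–(5) on classes `𝒮, 𝒜, ℬ` with
`ω := 𝒜 ∩ ℬ`, the pair `(𝒜, ℬ)` is a complete cotorsion pair cut along `𝒜^∧ ∩ 𝒮`. -/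
theorem completeCutCotorsion_of_relativeCogenerator
    {C : Type u} [CategoryTheory.Category.{v} C] [CategoryTheory.Abelian C]
    [CategoryTheory.HasExt.{w} C]
    (𝒮 𝒜 ℬ : Set C)
    (h1 : ClosedUnderExtensions 𝒜 ∧ ClosedUnderDirectSummands 𝒜)
    (h2 : ClosedUnderDirectSummands ℬ)
    (h3 : IsRelativeCogenerator (𝒜 ∩ ℬ ∩ 𝒮) 𝒜)
    (h4 : ResFin (𝒜 ∩ ℬ ∩ 𝒮) ⊆ ℬ)
    (h5 : (∀ A ∈ 𝒜 ∩ 𝒮, ∀ B ∈ ℬ, ext1Zero.{w} A B) ∧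
          (∀ A ∈ 𝒜, ∀ B ∈ ℬ ∩ 𝒮, ext1Zero.{w} A B)) :
    CompleteCutCotorsion.{w} 𝒜 ℬ (ResFin 𝒜 ∩ 𝒮) := by
  obtain ⟨hext, hsum⟩ := h1
  have left_approx : ResFin 𝒜 ∩ 𝒮 ⊆ EClassLeft 𝒜 ℬ :=
    Set.inter_subset_left.trans ((resFin_subset_eClassLeft_s7 hext h3).trans (eClassLeft_mono h4))
  have right_approx : ResFin 𝒜 ∩ 𝒮 ⊆ EClassRight 𝒜 ℬ :=
    Set.inter_subset_left.trans ((resFin_subset_eClassRight hext h3).trans (eClassRight_mono h4))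
  exact ⟨completeLeftCutCotorsion_of_subset_eClassLeft hsum
      (fun A hA B hB => h5.1 A ⟨hA.1, hA.2.2⟩ B hB) left_approx,
    completeRightCutCotorsion_of_subset_eClassRight h2
      (fun A hA B hB => h5.2 A hA B ⟨hB.1, hB.2.2⟩) right_approx⟩

end CutPaper
end
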